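/- arXiv:1904.10617 — 4 statements merged into one kernel-verified Lean document; each statement's English description precedes it below -/
import Mathlib

section
/- Let D > 0, let 0 < c < 1, and let α with 0 < α < 1. Suppose f : [0,1] → ℝ satisfies: for all x, x̄ with 0 < |x − x̄| < 1, there exists a natural number m ≥ 2 with |x − x̄| ≤ c^(m−2) and |f(x) − f(x̄)| ≤ D·(m−1)·|x − x̄|. Then f is Hölder continuous with exponent 1 − α and constant D·(1 + 1/(α·e·|ln c|)); that is, |f(x) − f(x̄)| ≤ D·(1 + 1/(α·e·|ln c|))·|x − x̄|^(1−α) for all such x, x̄. -/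
/-!
Write `t = |x - x'|`. The condition `t ≤ c ^ (m - 2)` gives `m - 2 ≤ -log t / |log c|`, so
`(m - 1) t ≤ t + t (-log t) / |log c|`. Both terms are at most multiples of `t ^ (1 - α)`:
`t ≤ t ^ (1 - α)` as `t < 1`, and `t (-log t) = t ^ (1 - α) · t ^ α (-log t)` where
`t ^ α (-log t) ≤ 1 / (α e)`.
-/

open Real

namespace Real

/-- `e y ≤ exp y` at `y = -α log t`, multiplied through by `t ^ α = exp (α log t)`. -/
lemma rpow_mul_neg_log_le {t α : ℝ} (ht : 0 < t) (hα : 0 < α) :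
    t ^ α * -log t ≤ 1 / (α * exp 1) := by
  have hpow : exp (α * log t) = t ^ α := by rw [rpow_def_of_pos ht, mul_comm]
  have h := exp_one_mul_le_exp (x := -(α * log t))
  rw [exp_neg, hpow] at h
  have h' := mul_le_mul_of_nonneg_left h (rpow_pos_of_pos ht α).le
  rw [mul_inv_cancel₀ (rpow_pos_of_pos ht α).ne'] at h'
  rw [le_div_iff₀ (by positivity)]
  linarith

lemma mul_neg_log_le_rpow {t α : ℝ} (ht : 0 < t) (hα : 0 < α) :
    t * -log t ≤ t ^ (1 - α) / (α * exp 1) := by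
  have hsplit : t = t ^ (1 - α) * t ^ α := by
    rw [← rpow_add ht, sub_add_cancel, rpow_one]
  calc t * -log t = t ^ (1 - α) * (t ^ α * -log t) := by
        nth_rewrite 1 [hsplit]; ring
    _ ≤ t ^ (1 - α) * (1 / (α * exp 1)) :=
        mul_le_mul_of_nonneg_left (rpow_mul_neg_log_le ht hα) (rpow_nonneg ht.le _)
    _ = t ^ (1 - α) / (α * exp 1) := by ring

lemma natCast_le_neg_log_div_of_le_pow {c t : ℝ} {n : ℕ} (hc0 : 0 < c) (hc1 : c < 1)
    (ht : 0 < t) (htc : t ≤ c ^ n) : (n : ℝ) ≤ -log t / |log c| := by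
  have hlogc : log c < 0 := log_neg hc0 hc1
  have h := log_le_log ht htc
  rw [log_pow] at h
  rw [abs_of_neg hlogc, le_div_iff₀ (neg_pos.mpr hlogc)]
  linarith

end Real

theorem stmt_3_general (D c α : ℝ) (hD : 0 < D) (hc0 : 0 < c) (hc1 : c < 1)
    (hα0 : 0 < α) (f : ℝ → ℝ)
    (hf : ∀ x ∈ Set.Icc (0:ℝ) 1, ∀ x' ∈ Set.Icc (0:ℝ) 1,
      0 < |x - x'| → |x - x'| < 1 →
      ∃ m : ℕ, 2 ≤ m ∧ |x - x'| ≤ c ^ (m - 2) ∧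
        |f x - f x'| ≤ D * ((m : ℝ) - 1) * |x - x'|) :
    ∀ x ∈ Set.Icc (0:ℝ) 1, ∀ x' ∈ Set.Icc (0:ℝ) 1,
      0 < |x - x'| → |x - x'| < 1 →
      |f x - f x'| ≤ D * (1 + 1 / (α * Real.exp 1 * |Real.log c|)) * |x - x'| ^ (1 - α) := by
  intro x hx x' hx' ht0 ht1
  set t := |x - x'|
  obtain ⟨m, hm2, htc, hfm⟩ := hf x hx x' hx' ht0 ht1
  have hlogc : 0 < |log c| := abs_pos.mpr (log_neg hc0 hc1).ne
  have hm : (m : ℝ) - 1 = ((m - 2 : ℕ) : ℝ) + 1 := by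
    rw [Nat.cast_sub hm2]; push_cast; ring
  have hlinear : t ≤ t ^ (1 - α) := self_le_rpow_of_le_one ht0.le ht1.le (by linarith)
  have hlog : ((m - 2 : ℕ) : ℝ) * t ≤ t ^ (1 - α) / (α * exp 1 * |log c|) :=
    calc ((m - 2 : ℕ) : ℝ) * t ≤ -log t / |log c| * t :=
          mul_le_mul_of_nonneg_right (natCast_le_neg_log_div_of_le_pow hc0 hc1 ht0 htc) ht0.le
      _ = t * -log t / |log c| := by ring
      _ ≤ t ^ (1 - α) / (α * exp 1) / |log c| :=
          div_le_div_of_nonneg_right (mul_neg_log_le_rpow ht0 hα0) hlogc.le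
      _ = t ^ (1 - α) / (α * exp 1 * |log c|) := by rw [div_div]
  calc |f x - f x'| ≤ D * ((m : ℝ) - 1) * t := hfm
    _ = D * (t + ((m - 2 : ℕ) : ℝ) * t) := by rw [hm]; ring
    _ ≤ D * (t ^ (1 - α) + t ^ (1 - α) / (α * exp 1 * |log c|)) := by gcongr
    _ = D * (1 + 1 / (α * exp 1 * |log c|)) * t ^ (1 - α) := by ring

theorem stmt_3 (D c α : ℝ) (hD : 0 < D) (hc0 : 0 < c) (hc1 : c < 1)
    (hα0 : 0 < α) (hα1 : α < 1) (f : ℝ → ℝ)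
    (hf : ∀ x ∈ Set.Icc (0:ℝ) 1, ∀ x' ∈ Set.Icc (0:ℝ) 1,
      0 < |x - x'| → |x - x'| < 1 →
      ∃ m : ℕ, 2 ≤ m ∧ |x - x'| ≤ c ^ (m - 2) ∧
        |f x - f x'| ≤ D * ((m : ℝ) - 1) * |x - x'|) :
    ∀ x ∈ Set.Icc (0:ℝ) 1, ∀ x' ∈ Set.Icc (0:ℝ) 1,
      0 < |x - x'| → |x - x'| < 1 →
      |f x - f x'| ≤ D * (1 + 1 / (α * Real.exp 1 * |Real.log c|)) * |x - x'| ^ (1 - α) :=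
  stmt_3_general D c α hD hc0 hc1 hα0 f hf
end

section
/- Let n ≥ 2, let L_i : [0,1] → [x_{i−1}, x_i] for i = 1, …, n be contraction homeomorphisms with Lipschitz constants c_{L_i} < 1, and let F_i : [0,1] × ℝ² → ℝ² be given by F_i(x, ȳ) = S_i(x)·ȳ + Q_i(x), where S_i : [0,1] → ℝ^{2×2} and Q_i : [0,1] → ℝ² are Lipschitz with constants L_S and L_Q (in the ‖·‖₁ operator norm and ‖·‖₁ norm), and sup_x ‖S_i(x)‖₁ ≤ S < 1. Restrict to a bounded set D ⊂ ℝ² with κ = sup_{ȳ∈D} ‖ȳ‖₁ < ∞. Then for any θ with 0 < θ < (1 − c_L)/(L_S·κ + L_Q), where c_L = max_i c_{L_i}, each map W_i(x, ȳ) = (L_i(x), F_i(x, ȳ)) is a contraction on [0,1] × D with respect to the metric ρ_θ((x, ȳ), (x′, ȳ′)) = |x − x′| + θ·‖ȳ − ȳ′‖₁, with contraction ratio max{c_L + θ(L_S κ + L_Q), S} < 1. -/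
/-!
Split `F x y - F x' y'` as `(S x - S x') y + S x' (y - y') + (Q x - Q x')`: the first and last terms
are of order `(L_S κ + L_Q) |x - x'|`, the middle one is at most `S ‖y - y'‖₁`. Adding `|L x - L x'|`
and weighting the second coordinate by `θ`, the `x`-part is scaled by `c_L + θ (L_S κ + L_Q)` and the
`y`-part by `S`; the bound on `θ` is exactly what makes the first factor less than `1`.
-/

/-- The ℓ¹ norm on ℝ². -/
noncomputable def norm1 (y : ℝ × ℝ) : ℝ := |y.1| + |y.2|

noncomputable def norm1AddGroupSeminorm : AddGroupSeminorm (ℝ × ℝ) where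
  toFun := norm1
  map_zero' := by simp [norm1]
  add_le' y z := by
    simp only [norm1, Prod.fst_add, Prod.snd_add]
    linarith [abs_add_le y.1 z.1, abs_add_le y.2 z.2]
  neg' y := by simp [norm1]

lemma norm1_nonneg (y : ℝ × ℝ) : 0 ≤ norm1 y :=
  apply_nonneg norm1AddGroupSeminorm y

namespace AddGroupSeminorm

variable {E F : Type*} [AddCommGroup E] [FunLike F E E] [AddMonoidHomClass F E E]

lemma affine_sub_affine_le (p : AddGroupSeminorm E) {A A' : F} {b b' y y' : E}
    {LS LQ Sb κ δ : ℝ} (hδ : 0 ≤ LS * δ)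
    (hA : p (A y - A' y) ≤ LS * δ * p y) (hA' : p (A' (y - y')) ≤ Sb * p (y - y'))
    (hb : p (b - b') ≤ LQ * δ) (hy : p y ≤ κ) :
    p ((A y + b) - (A' y' + b')) ≤ (LS * κ + LQ) * δ + Sb * p (y - y') := by
  have hsplit : (A y + b) - (A' y' + b') = (A y - A' y) + A' (y - y') + (b - b') := by
    rw [map_sub]; abel
  calc p ((A y + b) - (A' y' + b'))
      ≤ p (A y - A' y) + p (A' (y - y')) + p (b - b') := by
        rw [hsplit]
        exact (map_add_le_add p _ _).trans (add_le_add_left (map_add_le_add p _ _) _)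
    _ ≤ LS * δ * κ + Sb * p (y - y') + LQ * δ := by
        gcongr
        exact hA.trans (mul_le_mul_of_nonneg_left hy hδ)
    _ = (LS * κ + LQ) * δ + Sb * p (y - y') := by ring

end AddGroupSeminorm

lemma max_add_mul_lt_one {cL Sb θ K : ℝ} (hcL : cL < 1) (hSb : Sb < 1) (hθ0 : 0 < θ)
    (hθ : θ < (1 - cL) / K) : max (cL + θ * K) Sb < 1 := by
  have hK : 0 < K := by
    by_contra! hK
    exact (hθ.trans_le (div_nonpos_of_nonneg_of_nonpos (by linarith) hK)).not_gt hθ0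
  exact max_lt (by linarith [(lt_div_iff₀ hK).mp hθ]) hSb

lemma add_mul_le_max_mul_add_mul {a b u v cL K Sb θ : ℝ} (hu : 0 ≤ u) (hv : 0 ≤ v)
    (hθ : 0 ≤ θ) (ha : a ≤ cL * u) (hb : b ≤ K * u + Sb * v) :
    a + θ * b ≤ max (cL + θ * K) Sb * (u + θ * v) :=
  calc a + θ * b ≤ (cL + θ * K) * u + Sb * (θ * v) := by nlinarith
    _ ≤ max (cL + θ * K) Sb * u + max (cL + θ * K) Sb * (θ * v) := by
        gcongr
        exacts [le_max_left _ _, le_max_right _ _]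
    _ = max (cL + θ * K) Sb * (u + θ * v) := by ring

theorem stmt_5_general (n : ℕ)
    (L : Fin n → ℝ → ℝ) (cL : ℝ) (hcL1 : cL < 1)
    (hLlip : ∀ i, ∀ x ∈ Set.Icc (0:ℝ) 1, ∀ x' ∈ Set.Icc (0:ℝ) 1,
      |L i x - L i x'| ≤ cL * |x - x'|)
    (S : Fin n → ℝ → (ℝ × ℝ) →ₗ[ℝ] (ℝ × ℝ)) (Q : Fin n → ℝ → ℝ × ℝ)
    (LS LQ Sb κ : ℝ)
    (hSb : ∀ i x y, norm1 (S i x y) ≤ Sb * norm1 y) (hSb1 : Sb < 1)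
    (hSlip : ∀ i x x' y, norm1 (S i x y - S i x' y) ≤ LS * |x - x'| * norm1 y)
    (hQlip : ∀ i x x', norm1 (Q i x - Q i x') ≤ LQ * |x - x'|)
    (D : Set (ℝ × ℝ)) (hκ : ∀ y ∈ D, norm1 y ≤ κ)
    (θ : ℝ) (hθ0 : 0 < θ) (hθ : θ < (1 - cL) / (LS * κ + LQ)) :
    max (cL + θ * (LS * κ + LQ)) Sb < 1 ∧
    ∀ i, ∀ x ∈ Set.Icc (0:ℝ) 1, ∀ x' ∈ Set.Icc (0:ℝ) 1, ∀ y ∈ D, ∀ y' ∈ D,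
      |L i x - L i x'| + θ * norm1 ((S i x y + Q i x) - (S i x' y' + Q i x')) ≤
        max (cL + θ * (LS * κ + LQ)) Sb * (|x - x'| + θ * norm1 (y - y')) := by
  refine ⟨max_add_mul_lt_one hcL1 hSb1 hθ0 hθ, ?_⟩
  intro i x hx x' hx' y hy y' _
  have hLS : 0 ≤ LS * |x - x'| := by
    simpa [norm1] using (norm1_nonneg _).trans (hSlip i x x' (1, 0))
  have hF := norm1AddGroupSeminorm.affine_sub_affine_le (y' := y') hLS (hSlip i x x' y) (hSb i x' _) (hQlip i x x') (hκ y hy)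
  exact add_mul_le_max_mul_add_mul (abs_nonneg _) (norm1_nonneg _) hθ0.le
    (hLlip i x hx x' hx') hF

theorem stmt_5 (n : ℕ) (hn : 2 ≤ n)
    (L : Fin n → ℝ → ℝ) (cL : ℝ) (hcL0 : 0 ≤ cL) (hcL1 : cL < 1)
    (hLlip : ∀ i, ∀ x ∈ Set.Icc (0:ℝ) 1, ∀ x' ∈ Set.Icc (0:ℝ) 1,
      |L i x - L i x'| ≤ cL * |x - x'|)
    (S : Fin n → ℝ → (ℝ × ℝ) →ₗ[ℝ] (ℝ × ℝ)) (Q : Fin n → ℝ → ℝ × ℝ)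
    (LS LQ Sb κ : ℝ)
    (hSb : ∀ i x y, norm1 (S i x y) ≤ Sb * norm1 y) (hSb1 : Sb < 1)
    (hSlip : ∀ i x x' y, norm1 (S i x y - S i x' y) ≤ LS * |x - x'| * norm1 y)
    (hQlip : ∀ i x x', norm1 (Q i x - Q i x') ≤ LQ * |x - x'|)
    (D : Set (ℝ × ℝ)) (hκ : ∀ y ∈ D, norm1 y ≤ κ)
    (θ : ℝ) (hθ0 : 0 < θ) (hθ : θ < (1 - cL) / (LS * κ + LQ)) :
    max (cL + θ * (LS * κ + LQ)) Sb < 1 ∧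
    ∀ i, ∀ x ∈ Set.Icc (0:ℝ) 1, ∀ x' ∈ Set.Icc (0:ℝ) 1, ∀ y ∈ D, ∀ y' ∈ D,
      |L i x - L i x'| + θ * norm1 ((S i x y + Q i x) - (S i x' y' + Q i x')) ≤
        max (cL + θ * (LS * κ + LQ)) Sb * (|x - x'| + θ * norm1 (y - y')) :=
  stmt_5_general n L cL hcL1 hLlip S Q LS LQ Sb κ hSb hSb1 hSlip hQlip D hκ θ hθ0 hθ
end

section
/- Let f₁, f₂ : [0,1] → ℝ satisfy the functional equations f₁(x) = sᵢ(x)·f₁(Lᵢ^{-1}(x)) + sᵢ′(x)·f₂(Lᵢ^{-1}(x)) + qᵢ(Lᵢ^{-1}(x)) for x ∈ Iᵢ = [ (i−1)/n, i/n ], where Lᵢ(x) = (x + i − 1)/n, and sᵢ, sᵢ′, qᵢ are Lipschitz with constants L_{sᵢ}, L_{sᵢ′}, L_{qᵢ} and sup norms bounded by ω̄ᵢ = max{‖sᵢ‖_∞, ‖sᵢ′‖_∞}. Then the oscillation of f₁ on Iᵢ satisfies R_{f₁}[Iᵢ] ≤ ω̄ᵢ·(R_{f₁}[0,1] + R_{f₂}[0,1])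 + (L_{sᵢ}·‖f₁‖_∞ + L_{sᵢ′}·‖f₂‖_∞ + n·L_{qᵢ})/n, where R_g[D] = sup{|g(x₂) − g(x₁)| : x₁, x₂ ∈ D}. -/
/-- The oscillation `R_g[D]` of `g` over `D`. -/
noncomputable def oscOn (g : ℝ → ℝ) (D : Set ℝ) : ℝ :=
  sSup {r : ℝ | ∃ x₁ ∈ D, ∃ x₂ ∈ D, r = |g x₂ - g x₁|}

/-!
Subtract the self-referential equation at `x` and at `y` in `Iᵢ`. Splitting
`s x * f₁ u - s y * f₁ v = s x * (f₁ u - f₁ v) + (s x - s y) * f₁ v` (and likewise for `s'`),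
the first parts are bounded by `ω` times the oscillations of `f₁, f₂` on `[0,1]`, the second by
`Ls * |x - y| * B₁` with `|x - y| ≤ 1/n`, and the `q` term by `Lq`, since `x ↦ n x - (i - 1)`
maps `Iᵢ` into `[0,1]`.
-/

open Set

lemma nonneg_of_abs_sub_le_mul_abs_sub {g : ℝ → ℝ} {L : ℝ}
    (hg : ∀ x y : ℝ, |g x - g y| ≤ L * |x - y|) : 0 ≤ L := by
  simpa using (abs_nonneg _).trans (hg 1 0)

lemma abs_mul_add_mul_add_sub_le (σ₁ σ₂ τ₁ τ₂ u₁ u₂ v₁ v₂ c d : ℝ) :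
    |(σ₁ * u₁ + σ₂ * u₂ + c) - (τ₁ * v₁ + τ₂ * v₂ + d)| ≤
      |σ₁| * |u₁ - v₁| + |σ₁ - τ₁| * |v₁| + (|σ₂| * |u₂ - v₂| + |σ₂ - τ₂| * |v₂|) + |c - d| := by
  have hsplit : (σ₁ * u₁ + σ₂ * u₂ + c) - (τ₁ * v₁ + τ₂ * v₂ + d) =
      σ₁ * (u₁ - v₁) + (σ₁ - τ₁) * v₁ + (σ₂ * (u₂ - v₂) + (σ₂ - τ₂) * v₂) + (c - d) := by ring
  rw [hsplit, ← abs_mul, ← abs_mul, ← abs_mul, ← abs_mul]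
  calc _ ≤ |σ₁ * (u₁ - v₁) + (σ₁ - τ₁) * v₁ + (σ₂ * (u₂ - v₂) + (σ₂ - τ₂) * v₂)| + |c - d| :=
        abs_add_le _ _
    _ ≤ _ := by gcongr; exact (abs_add_le _ _).trans (add_le_add (abs_add_le _ _) (abs_add_le _ _))

section Oscillation

variable {g : ℝ → ℝ} {D : Set ℝ}

lemma abs_sub_le_oscOn {B : ℝ} (hB : ∀ x ∈ D, |g x| ≤ B) {x y : ℝ} (hx : x ∈ D) (hy : y ∈ D) :
    |g x - g y| ≤ oscOn g D := by
  refine le_csSup ⟨2 * B, ?_⟩ ⟨y, hy, x, hx, rfl⟩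
  rintro r ⟨x₁, h₁, x₂, h₂, rfl⟩
  linarith [abs_sub (g x₂) (g x₁), hB x₁ h₁, hB x₂ h₂]

lemma oscOn_le {C : ℝ} (hD : D.Nonempty) (h : ∀ x ∈ D, ∀ y ∈ D, |g x - g y| ≤ C) :
    oscOn g D ≤ C := by
  obtain ⟨a, ha⟩ := hD
  refine csSup_le ⟨_, a, ha, a, ha, rfl⟩ ?_
  rintro r ⟨x₁, h₁, x₂, h₂, rfl⟩
  exact h x₂ h₂ x₁ h₁

end Oscillation

lemma oscOn_le_of_eq_mul_comp_add {D E : Set ℝ} {φ f₁ f₂ s s' q : ℝ → ℝ}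
    {Ls Ls' Lq B₁ B₂ ω δ δ' : ℝ} (hD : D.Nonempty) (hφ : MapsTo φ D E)
    (hδ : ∀ x ∈ D, ∀ y ∈ D, |x - y| ≤ δ) (hδ' : ∀ x ∈ D, ∀ y ∈ D, |φ x - φ y| ≤ δ')
    (hs : ∀ x y : ℝ, |s x - s y| ≤ Ls * |x - y|)
    (hs' : ∀ x y : ℝ, |s' x - s' y| ≤ Ls' * |x - y|)
    (hq : ∀ x y : ℝ, |q x - q y| ≤ Lq * |x - y|)
    (hω : ∀ x ∈ D, |s x| ≤ ω ∧ |s' x| ≤ ω)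
    (hB₁ : ∀ x ∈ E, |f₁ x| ≤ B₁) (hB₂ : ∀ x ∈ E, |f₂ x| ≤ B₂)
    (hfe : ∀ x ∈ D, f₁ x = s x * f₁ (φ x) + s' x * f₂ (φ x) + q (φ x)) :
    oscOn f₁ D ≤ ω * (oscOn f₁ E + oscOn f₂ E) + Ls * δ * B₁ + Ls' * δ * B₂ + Lq * δ' := by
  obtain ⟨a, ha⟩ := hD
  have hω₀ : 0 ≤ ω := (abs_nonneg _).trans (hω a ha).1
  have hδ₀ : 0 ≤ δ := (abs_nonneg _).trans (hδ a ha a ha)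
  have hLs₀ := nonneg_of_abs_sub_le_mul_abs_sub hs
  have hLs'₀ := nonneg_of_abs_sub_le_mul_abs_sub hs'
  have hLq₀ := nonneg_of_abs_sub_le_mul_abs_sub hq
  refine oscOn_le ⟨a, ha⟩ fun x hx y hy => ?_
  have hu := hφ hx
  have hv := hφ hy
  have hsxy : |s x - s y| ≤ Ls * δ := (hs x y).trans (by gcongr; exact hδ x hx y hy)
  have hs'xy : |s' x - s' y| ≤ Ls' * δ := (hs' x y).trans (by gcongr; exact hδ x hx y hy)
  have hquv : |q (φ x) - q (φ y)| ≤ Lq * δ' := (hq _ _).trans (by gcongr; exact hδ' x hx y hy)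
  rw [hfe x hx, hfe y hy]
  refine (abs_mul_add_mul_add_sub_le _ _ _ _ _ _ _ _ _ _).trans ?_
  calc _ ≤ ω * oscOn f₁ E + Ls * δ * B₁ + (ω * oscOn f₂ E + Ls' * δ * B₂) + Lq * δ' := by
        gcongr
        exacts [(hω x hx).1, abs_sub_le_oscOn hB₁ hu hv, hB₁ _ hv, (hω x hx).2,
          abs_sub_le_oscOn hB₂ hu hv, hB₂ _ hv]
    _ = _ := by ring

theorem stmt_14_general (n : ℕ) (hn : 1 ≤ n) (i : ℕ)
    (f₁ f₂ s s' q : ℝ → ℝ)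
    (Ls Ls' Lq B₁ B₂ ω : ℝ)
    (hs : ∀ x y : ℝ, |s x - s y| ≤ Ls * |x - y|)
    (hs' : ∀ x y : ℝ, |s' x - s' y| ≤ Ls' * |x - y|)
    (hq : ∀ x y : ℝ, |q x - q y| ≤ Lq * |x - y|)
    (hω : ∀ x ∈ Set.Icc (((i:ℝ) - 1) / n) ((i:ℝ) / n), |s x| ≤ ω ∧ |s' x| ≤ ω)
    (hB₁ : ∀ x ∈ Set.Icc (0:ℝ) 1, |f₁ x| ≤ B₁)
    (hB₂ : ∀ x ∈ Set.Icc (0:ℝ) 1, |f₂ x| ≤ B₂)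
    (hfe : ∀ x ∈ Set.Icc (((i:ℝ) - 1) / n) ((i:ℝ) / n),
      f₁ x = s x * f₁ (n * x - ((i:ℝ) - 1)) + s' x * f₂ (n * x - ((i:ℝ) - 1)) +
        q (n * x - ((i:ℝ) - 1))) :
    oscOn f₁ (Set.Icc (((i:ℝ) - 1) / n) ((i:ℝ) / n)) ≤
      ω * (oscOn f₁ (Set.Icc 0 1) + oscOn f₂ (Set.Icc 0 1)) +
        (Ls * B₁ + Ls' * B₂ + n * Lq) / n := by
  have hn₀ : (0:ℝ) < n := by exact_mod_cast hn
  have hlen : (i:ℝ) / n - ((i:ℝ) - 1) / n = 1 / n := by ring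
  have hmaps : MapsTo (fun x : ℝ => n * x - ((i:ℝ) - 1))
      (Icc (((i:ℝ) - 1) / n) ((i:ℝ) / n)) (Icc 0 1) := by
    rintro x ⟨hax, hxb⟩
    rw [div_le_iff₀ hn₀] at hax
    rw [le_div_iff₀ hn₀] at hxb
    constructor <;> linarith
  have hsub := oscOn_le_of_eq_mul_comp_add (δ := 1 / n) (δ' := 1)
    (nonempty_Icc.2 (by linarith [hlen, one_div_pos.2 hn₀])) hmaps
    (fun x hx y hy => hlen ▸ Real.dist_le_of_mem_Icc hx hy)
    (fun x hx y hy => Real.dist_le_of_mem_Icc_01 (hmaps hx) (hmaps hy))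
    hs hs' hq hω hB₁ hB₂ hfe
  convert hsub using 1
  field_simp
  ring

theorem stmt_14 (n : ℕ) (hn : 1 ≤ n) (i : ℕ) (hi1 : 1 ≤ i) (hin : i ≤ n)
    (f₁ f₂ s s' q : ℝ → ℝ)
    (Ls Ls' Lq B₁ B₂ ω : ℝ)
    (hs : ∀ x y : ℝ, |s x - s y| ≤ Ls * |x - y|)
    (hs' : ∀ x y : ℝ, |s' x - s' y| ≤ Ls' * |x - y|)
    (hq : ∀ x y : ℝ, |q x - q y| ≤ Lq * |x - y|)
    (hω : ∀ x ∈ Set.Icc (((i:ℝ) - 1) / n) ((i:ℝ) / n), |s x| ≤ ω ∧ |s' x| ≤ ω)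
    (hB₁ : ∀ x ∈ Set.Icc (0:ℝ) 1, |f₁ x| ≤ B₁)
    (hB₂ : ∀ x ∈ Set.Icc (0:ℝ) 1, |f₂ x| ≤ B₂)
    (hfe : ∀ x ∈ Set.Icc (((i:ℝ) - 1) / n) ((i:ℝ) / n),
      f₁ x = s x * f₁ (n * x - ((i:ℝ) - 1)) + s' x * f₂ (n * x - ((i:ℝ) - 1)) +
        q (n * x - ((i:ℝ) - 1))) :
    oscOn f₁ (Set.Icc (((i:ℝ) - 1) / n) ((i:ℝ) / n)) ≤
      ω * (oscOn f₁ (Set.Icc 0 1) + oscOn f₂ (Set.Icc 0 1)) +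
        (Ls * B₁ + Ls' * B₂ + n * Lq) / n :=
  stmt_14_general n hn i f₁ f₂ s s' q Ls Ls' Lq B₁ B₂ ω hs hs' hq hω hB₁ hB₂ hfe
end

section
/- Let ω, ω̃ ≥ 0 with ω + ω̃ < 1 and suppose nonnegative reals a, b satisfy a ≤ ω·(a + b) + (1 + ω)·ε and b ≤ ω̃·(a + b) + (1 + ω̃)·ε for some ε ≥ 0. Then a ≤ ((1 + 2ω − ω̃)/(1 − ω − ω̃))·ε. -/
/-! Adding the two inequalities bounds `a + b` by `(2 + ω + ω') ε / (1 - ω - ω')`; substituting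
this bound into the first inequality gives the claim, since
`ω (2 + ω + ω') + (1 + ω) (1 - ω - ω') = 1 + 2ω - ω'`. -/

theorem le_div_one_sub_of_le_mul_add {θ x c : ℝ} (hθ : θ < 1) (h : x ≤ θ * x + c) :
    x ≤ c / (1 - θ) := by
  rw [le_div_iff₀ (sub_pos.2 hθ)]
  linarith

theorem stmt_16_general (ω ω' a b ε : ℝ) (hω : 0 ≤ ω)
    (hsum : ω + ω' < 1)
    (h1 : a ≤ ω * (a + b) + (1 + ω) * ε) (h2 : b ≤ ω' * (a + b) + (1 + ω') * ε) :
    a ≤ (1 + 2 * ω - ω') / (1 - ω - ω') * ε := by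
  have hD : 1 - ω - ω' ≠ 0 := by linarith
  have hab : a + b ≤ (2 + ω + ω') * ε / (1 - (ω + ω')) :=
    le_div_one_sub_of_le_mul_add hsum (by linarith)
  calc a ≤ ω * (a + b) + (1 + ω) * ε := h1
    _ ≤ ω * ((2 + ω + ω') * ε / (1 - (ω + ω'))) + (1 + ω) * ε := by gcongr
    _ = (1 + 2 * ω - ω') / (1 - ω - ω') * ε := by
      rw [sub_add_eq_sub_sub]
      field_simp
      ring

theorem stmt_16 (ω ω' a b ε : ℝ) (hω : 0 ≤ ω) (hω' : 0 ≤ ω')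
    (hsum : ω + ω' < 1) (ha : 0 ≤ a) (hb : 0 ≤ b) (hε : 0 ≤ ε)
    (h1 : a ≤ ω * (a + b) + (1 + ω) * ε) (h2 : b ≤ ω' * (a + b) + (1 + ω') * ε) :
    a ≤ (1 + 2 * ω - ω') / (1 - ω - ω') * ε :=
  stmt_16_general ω ω' a b ε hω hsum h1 h2
end
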